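/- arXiv:1307.7976 — 4 statements merged into one kernel-verified Lean document; each statement's English description precedes it below -/
import Mathlib

section
/- Suppose an estimate M of a remote clock is updated only at reception events that are at least d and at most (2ϑ² + 3ϑ)d real time apart, and each update increases M by exactly 2ϑd. Then over any interval [t₁, t₂] containing such updates, 2(t₂ - t₁)/(2ϑ+3) - 2ϑd ≤ M(t₂) - M(t₁) ≤ 2ϑ(t₂ - t₁) + 2ϑd. -/
/-- Estimate progress bound: if an estimate M is incremented by exactly 2ϑd at
update times that are at least d and at most (2ϑ² + 3ϑ)d apart, then over
[t₁, t₂] the total progress satisfies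
2(t₂ - t₁)/(2ϑ+3) - 2ϑd ≤ M t₂ - M t₁ ≤ 2ϑ(t₂ - t₁) + 2ϑd. -/
theorem estimate_progress
    (ϑ d : ℝ) (hϑ : 1 ≤ ϑ) (hd : 0 < d)
    (t₁ t₂ : ℝ) (m : ℕ) (u : ℕ → ℝ) (M : ℝ → ℝ)
    (hgap : ∀ i : ℕ, i < m →
      d ≤ u (i + 1) - u i ∧ u (i + 1) - u i ≤ (2 * ϑ ^ 2 + 3 * ϑ) * d)
    (hfirst : t₁ ≤ u 0) (hfirst' : u 0 - t₁ ≤ (2 * ϑ ^ 2 + 3 * ϑ) * d)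
    (hlast : u m ≤ t₂) (hlast' : t₂ - u m ≤ (2 * ϑ ^ 2 + 3 * ϑ) * d)
    (hM : M t₂ - M t₁ = 2 * ϑ * d * (m + 1)) :
    2 * (t₂ - t₁) / (2 * ϑ + 3) - 2 * ϑ * d ≤ M t₂ - M t₁ ∧
      M t₂ - M t₁ ≤ 2 * ϑ * (t₂ - t₁) + 2 * ϑ * d := by
  have hϑ0 : (0:ℝ) < ϑ := lt_of_lt_of_le one_pos hϑ
  have hden : (0:ℝ) < 2 * ϑ + 3 := by nlinarith
  -- bounds on u m - u 0 by induction
  have key : ∀ n : ℕ, n ≤ m →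
      (n : ℝ) * d ≤ u n - u 0 ∧ u n - u 0 ≤ (n : ℝ) * ((2 * ϑ ^ 2 + 3 * ϑ) * d) := by
    intro n hn
    induction n with
    | zero => simp
    | succ k ih =>
      have hk : k ≤ m := Nat.le_of_succ_le hn
      have hkm : k < m := hn
      obtain ⟨h1, h2⟩ := ih hk
      obtain ⟨g1, g2⟩ := hgap k hkm
      constructor
      · push_cast; linarith
      · push_cast; linarith
  obtain ⟨hlo, hhi⟩ := key m le_rfl
  constructor
  · -- lower bound
    have ht : t₂ - t₁ ≤ ((m : ℝ) + 2) * ((2 * ϑ ^ 2 + 3 * ϑ) * d) := by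
      nlinarith
    rw [hM, sub_le_iff_le_add, div_le_iff₀ hden]
    nlinarith
  · -- upper bound
    have ht : (m : ℝ) * d ≤ t₂ - t₁ := by nlinarith
    rw [hM]
    nlinarith
end

section
/- In the silent-consensus wrapper: if every correct node has input 0, then no correct node sends any message in the first two rounds, every correct node receives at most f first-round messages (all from faulty nodes), no correct node participates in the inner protocol, and every correct node outputs 0. -/
/-- Silence: if every correct node has input 0 (false), then correct nodes send
no messages in the first two rounds, every correct node receives at most f
round-1 messages (all from faulty nodes), no correct node participates in the
inner protocol (i.e., never reaches f+1 round-1 messages), and every correct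
node outputs 0 (false). -/
theorem silent_wrapper_silence
    (n f : ℕ) (hnf : 3 * f < n)
    (Faulty : Finset (Fin n)) (hF : Faulty.card ≤ f)
    (input : Fin n → Bool)
    (recv1 recv2 : Fin n → Finset (Fin n))
    (output : Fin n → Bool)
    -- a correct node's round-1 broadcast is received by a correct node iff its input is 1
    (hsend1 : ∀ v w : Fin n, v ∉ Faulty → w ∉ Faulty →
      (w ∈ recv1 v ↔ input w = true))
    -- round 2: a correct node broadcasts iff its input is 1 and it received ≥ n - f round-1 messages
    (hsend2 : ∀ v w : Fin n, v ∉ Faulty → w ∉ Faulty →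
      (w ∈ recv2 v ↔ (input w = true ∧ n - f ≤ (recv1 w).card)))
    -- a correct node outputs 0 if it does not participate (fewer than f+1 round-1 messages)
    -- or receives at most f round-2 messages
    (houtput : ∀ v : Fin n, v ∉ Faulty →
      ((recv1 v).card < f + 1 ∨ (recv2 v).card ≤ f) → output v = false)
    -- every correct node has input 0
    (hinput : ∀ w : Fin n, w ∉ Faulty → input w = false) :
    ∀ v : Fin n, v ∉ Faulty →
      (∀ w : Fin n, w ∉ Faulty → w ∉ recv1 v ∧ w ∉ recv2 v) ∧
      recv1 v ⊆ Faulty ∧ (recv1 v).card ≤ f ∧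
      (recv1 v).card < f + 1 ∧ output v = false := by
  intro v hv
  have hsub : recv1 v ⊆ Faulty := by
    intro w hw
    by_contra hwF
    have := (hsend1 v w hv hwF).mp hw
    simp [hinput w hwF] at this
  have hcard : (recv1 v).card ≤ f := le_trans (Finset.card_le_card hsub) hF
  refine ⟨?_, hsub, hcard, Nat.lt_succ_of_le hcard, ?_⟩
  · intro w hw
    constructor
    · intro h
      have := (hsend1 v w hv hw).mp h
      simp [hinput w hw] at this
    · intro h
      have := ((hsend2 v w hv hw).mp h).1
      simp [hinput w hw] at this
  · exact houtput v hv (Or.inl (Nat.lt_succ_of_le hcard))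
end

section
/- Rate-limiting bound: if correct nodes send at most one echo message per label (v, ·) per T/ϑ real time, and a correct node participates in an instance with non-zero input only upon receiving n - 2f ≥ f + 1 echoes from correct nodes, then within any time interval of length T̃ = (T/ϑ - d)/ϑ there is at most one instance labeled (v, ·) in which some correct node participates with non-zero input. -/
/-- Rate limiting: correct nodes send echoes for labels (v, ·) at least T/ϑ
real time apart, and non-zero-input participation in an instance requires
echoes from at least n - 2f correct nodes sent within a window of length d.
Then two distinct instances labeled (v, ·) with non-zero-input participation
cannot occur within (T/ϑ - d)/ϑ time of each other. -/
theorem rate_limiting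
    (n f : ℕ) (hnf : 3 * f < n)
    (ϑ d T : ℝ) (hϑ : 1 ≤ ϑ) (hd : 0 < d) (hT : 2 * ϑ * d ≤ T)
    {α : Type*} [DecidableEq α]
    (G S₁ S₂ : Finset α) (hGcard : G.card ≤ n - f)
    (hS₁ : S₁ ⊆ G) (hS₂ : S₂ ⊆ G)
    (hS₁card : n - 2 * f ≤ S₁.card) (hS₂card : n - 2 * f ≤ S₂.card)
    (e₁ e₂ : α → ℝ) (t₁ t₂ : ℝ)
    -- echoes for each instance are sent within a window of length d
    (hw₁ : ∀ w ∈ S₁, t₁ ≤ e₁ w ∧ e₁ w < t₁ + d)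
    (hw₂ : ∀ w ∈ S₂, t₂ ≤ e₂ w ∧ e₂ w < t₂ + d)
    (hgap : ∀ w ∈ G, T / ϑ ≤ |e₁ w - e₂ w|)
    -- the two instances occur within T̃ = (T/ϑ - d)/ϑ time of each other
    (hclose : |t₂ - t₁| ≤ (T / ϑ - d) / ϑ) :
    False := by
  -- S₁ and S₂ intersect
  have hpos : 0 < ϑ := lt_of_lt_of_le one_pos hϑ
  obtain ⟨w, hw⟩ : (S₁ ∩ S₂).Nonempty := by
    rw [← Finset.card_pos]
    by_contra h
    push_neg at h
    interval_cases h' : (S₁ ∩ S₂).card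
    have hu : (S₁ ∪ S₂).card ≤ G.card := Finset.card_le_card (Finset.union_subset hS₁ hS₂)
    have := Finset.card_union_add_card_inter S₁ S₂
    omega
  simp only [Finset.mem_inter] at hw
  obtain ⟨hw1, hw2⟩ := hw
  have hgapw := hgap w (hS₁ hw1)
  obtain ⟨h1l, h1r⟩ := hw₁ w hw1
  obtain ⟨h2l, h2r⟩ := hw₂ w hw2
  -- T/ϑ ≥ 2d
  have hTd : 2 * d ≤ T / ϑ := by
    rw [le_div_iff₀ hpos]; nlinarith
  have hnn : 0 ≤ T / ϑ - d := by linarith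
  have hclose' : |t₂ - t₁| ≤ T / ϑ - d := by
    calc |t₂ - t₁| ≤ (T / ϑ - d) / ϑ := hclose
    _ ≤ T / ϑ - d := by
      rw [div_le_iff₀ hpos]; nlinarith
  rw [abs_le] at hclose'
  have habs : |e₁ w - e₂ w| < T / ϑ := by
    rw [abs_lt]; constructor <;> linarith
  linarith
end

section
/- Memory-wipe safety with modular clocks: if clocks are taken modulo M with M ≥ 2·W where W is an upper bound on the real-time lifetime of any memory entry (scaled by ϑ), then for any fixed label (v, H), between any two times at which a correct node accepts an initialization message with that label, there is an interval of length at least W during which the label is rejected, hence memory associated with the label is cleared before reuse. -/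
/-- Memory-wipe safety with modular clocks: a fixed clock value Hval is
accepted at time t iff it is within circular distance Δ (mod M) of the
estimate E t, where E increases at rates in [1, ϑ]. If M ≥ ϑ(W + 2Δ) + 2Δ
and 4Δ < M, then any two acceptance times of the same value are either within
2Δ of each other or at least W apart; hence memory entries (which live at most
W real time) are cleared before the label can be reused. -/
theorem modular_clock_memory_wipe
    (ϑ Δ W M : ℝ) (hϑ : 1 ≤ ϑ) (hΔ : 0 ≤ Δ) (hW : 0 ≤ W)
    (hM : ϑ * (W + 2 * Δ) + 2 * Δ ≤ M) (hΔM : 4 * Δ < M)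
    (E : ℝ → ℝ) (Hval : ℝ)
    (hdrift : ∀ t t' : ℝ, 0 ≤ t → t ≤ t' →
      t' - t ≤ E t' - E t ∧ E t' - E t ≤ ϑ * (t' - t))
    (accept : ℝ → Prop)
    (haccept : ∀ t : ℝ, accept t ↔ ∃ k : ℤ, |Hval - E t - k * M| ≤ Δ) :
    ∀ t₁ t₂ : ℝ, 0 ≤ t₁ → t₁ ≤ t₂ → accept t₁ → accept t₂ →
      t₂ - t₁ ≤ 2 * Δ ∨ W ≤ t₂ - t₁ := by
  intro t₁ t₂ ht₁ hle ha₁ ha₂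
  obtain ⟨k₁, hk₁⟩ := (haccept t₁).1 ha₁
  obtain ⟨k₂, hk₂⟩ := (haccept t₂).1 ha₂
  obtain ⟨hd₁, hd₂⟩ := hdrift t₁ t₂ ht₁ hle
  have hϑpos : (0:ℝ) < ϑ := lt_of_lt_of_le one_pos hϑ
  have hMpos : (0:ℝ) < M := lt_of_le_of_lt (by linarith) hΔM
  -- |E t₂ - E t₁ - (k₁ - k₂) * M| ≤ 2Δ
  have key : |E t₂ - E t₁ - ((k₁ : ℝ) - (k₂ : ℝ)) * M| ≤ 2 * Δ := by
    have := abs_sub (Hval - E t₁ - k₁ * M) (Hval - E t₂ - k₂ * M)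
    have h := abs_sub_abs_le_abs_sub (Hval - E t₁ - k₁ * M) (Hval - E t₂ - k₂ * M)
    calc |E t₂ - E t₁ - ((k₁:ℝ) - (k₂:ℝ)) * M|
        = |(Hval - E t₁ - k₁ * M) - (Hval - E t₂ - k₂ * M)| := by ring_nf
      _ ≤ |Hval - E t₁ - k₁ * M| + |Hval - E t₂ - k₂ * M| := abs_sub _ _
      _ ≤ 2 * Δ := by linarith
  rw [abs_le] at key
  rcases le_or_gt k₁ k₂ with hk | hk
  · left
    have : ((k₁:ℝ) - k₂) * M ≤ 0 := by
      apply mul_nonpos_of_nonpos_of_nonneg _ hMpos.le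
      have : (k₁:ℝ) ≤ k₂ := by exact_mod_cast hk
      linarith
    linarith
  · right
    have h1 : (1:ℝ) ≤ (k₁:ℝ) - k₂ := by
      have : k₂ + 1 ≤ k₁ := hk
      have : ((k₂:ℝ) + 1) ≤ k₁ := by exact_mod_cast this
      linarith
    have hM1 : M ≤ ((k₁:ℝ) - k₂) * M := le_mul_of_one_le_left hMpos.le h1
    have : ϑ * W ≤ ϑ * (t₂ - t₁) := by nlinarith
    exact le_of_mul_le_mul_left this hϑpos
end
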